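/- arXiv:2405.09626 — 5 statements merged into one kernel-verified Lean document; each statement's English description precedes it below -/
import Mathlib

section
/- For all integers d ≥ 1 and n ≥ 1, the Haar average of the n-fold tensor power of a unitary conjugating the rank-one projector onto the constant basis word equals the normalized symmetrizer: ∫ U^{⊗n} |e_{(n)}⟩⟨e_{(n)}| (U^{⊗n})^† dU = Π_{(n)} / binom(n+d−1, n), where the integral is the entrywise Bochner integral over the Haar probability measure on U(d). -/
open MeasureTheory Matrix
open scoped ComplexOrder

noncomputable section

/-- The unitary group `U(d)`. -/
abbrev UG (d : ℕ) := Matrix.unitaryGroup (Fin d) ℂ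

noncomputable instance (d : ℕ) : MeasurableSpace (UG d) := borel _

instance (d : ℕ) : BorelSpace (UG d) := ⟨rfl⟩

/-- The permutation matrix `ψ(π)` on `(ℂ^d)^{⊗n}`, with `(x,y)` entry `1` iff `y = x ∘ π`. -/
def psi (d n : ℕ) (π : Equiv.Perm (Fin n)) : Matrix (Fin n → Fin d) (Fin n → Fin d) ℂ :=
  Matrix.of fun x y => if y = x ∘ π then 1 else 0

/-- The symmetrizer `Π_{(n)} = (1/n!) ∑_{π ∈ S_n} ψ(π)`. -/
def symmetrizer (d n : ℕ) : Matrix (Fin n → Fin d) (Fin n → Fin d) ℂ :=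
  ((n.factorial : ℂ))⁻¹ • ∑ π : Equiv.Perm (Fin n), psi d n π

/-- The `n`-fold tensor power of a `d × d` matrix: `(U^{⊗n})_{x,y} = ∏ i, U_{x i, y i}`. -/
def tpow (d n : ℕ) (U : Matrix (Fin d) (Fin d) ℂ) :
    Matrix (Fin n → Fin d) (Fin n → Fin d) ℂ :=
  Matrix.of fun x y => ∏ i, U (x i) (y i)

/-- The list consisting of `μ 0` copies of `0`, then `μ 1` copies of `1`, etc. -/
def wordList (d : ℕ) (μ : Fin d → ℕ) : List (Fin d) :=
  (List.ofFn fun i => List.replicate (μ i) i).flatten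

lemma wordList_length (d : ℕ) (μ : Fin d → ℕ) : (wordList d μ).length = ∑ i, μ i := by
  simp [wordList, List.length_flatten, Function.comp, List.sum_ofFn]

/-- The word indexing the basis vector `|e_μ⟩`: the first `μ 0` tensor factors carry the
first basis label, the next `μ 1` factors the second basis label, etc. -/
def word (d n : ℕ) (μ : Fin d → ℕ) (hsum : ∑ i, μ i = n) (j : Fin n) : Fin d :=
  (wordList d μ).get ⟨j, by rw [wordList_length, hsum]; exact j.isLt⟩

/-- `∫ U^{⊗n} |e_w⟩⟨e_w| (U^{⊗n})^† dq` for a basis word `w` (entrywise Bochner integral). -/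
def rhoWord (d n : ℕ) (w : Fin n → Fin d) (q : Measure (UG d)) :
    Matrix (Fin n → Fin d) (Fin n → Fin d) ℂ :=
  Matrix.of fun x y =>
    ∫ U : UG d, tpow d n (U : Matrix (Fin d) (Fin d) ℂ) x w *
      star (tpow d n (U : Matrix (Fin d) (Fin d) ℂ) y w) ∂q

/-- The Haar-twirled unequal state `ρ_≠^μ`. -/
def rhoNE (d n : ℕ) (μ : Fin d → ℕ) (hsum : ∑ i, μ i = n) (haar : Measure (UG d)) :
    Matrix (Fin n → Fin d) (Fin n → Fin d) ℂ :=
  rhoWord d n (word d n μ hsum) haar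

/-- The partition `(n, 0, …, 0)`. -/
def muEq (d n : ℕ) (hd : 0 < d) : Fin d → ℕ := fun i => if i = ⟨0, hd⟩ then n else 0

lemma muEq_sum (d n : ℕ) (hd : 0 < d) : ∑ i, muEq d n hd i = n := by
  simp [muEq]

/-- The equal state `ρ_=^n = ρ_≠^{(n,0,…,0)}`. -/
def rhoEQ (d n : ℕ) (hd : 0 < d) (haar : Measure (UG d)) :
    Matrix (Fin n → Fin d) (Fin n → Fin d) ℂ :=
  rhoNE d n (muEq d n hd) (muEq_sum d n hd) haar

/-- The set of POVM elements: Hermitian `P` with `0 ⪯ P ⪯ I`. -/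
def POVMs (d n : ℕ) : Set (Matrix (Fin n → Fin d) (Fin n → Fin d) ℂ) :=
  {P | P.PosSemidef ∧ (1 - P).PosSemidef}

/-- The average success probability of the test `{P, I - P}` with prior `p` on the equal case. -/
def successProb (d n : ℕ) (hd : 0 < d) (μ : Fin d → ℕ) (hsum : ∑ i, μ i = n)
    (haar : Measure (UG d)) (p : ℝ) (P : Matrix (Fin n → Fin d) (Fin n → Fin d) ℂ) : ℝ :=
  p * (Matrix.trace (P * rhoEQ d n hd haar)).re +
    (1 - p) * (1 - (Matrix.trace (P * rhoNE d n μ hsum haar)).re)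

/-!
The `(x, y)` entry of the average is the moment `∫ ∏ᵢ u (x i) * conj (u (y i)) dU` of the column
`u = U e₁` of a Haar unitary, so it only depends on the contents (multisets of letters) of the
words `x` and `y`. By invariance of the Haar measure the average `ρ` commutes with every `V^{⊗n}`;
differentiating along `θ ↦ exp (θ • B)` it also commutes with `∑ᵢ 1 ⊗ ⋯ ⊗ B ⊗ ⋯ ⊗ 1` for every
skew-Hermitian `B`. For `B = i E_aa` this forces `ρ x y = 0` unless `x` and `y` have the same
content; for `B = E_ab - E_ba` it gives `(m_b + 1) M(a + m) = (m_a + 1) M(b + m)` for the diagonal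
moments `M`. Together with `∑ₐ |u a|² = 1`, which gives `∑ₐ M(a + m) = M(m)`, this determines
`M(m) = ∏ₐ m_a! (d - 1)! / (|m| + d - 1)!`. Counting the permutations `π` with `y = x ∘ π` gives
the same entries for the symmetrizer divided by `binom(n + d - 1, n)`.
-/

open Finset

section Content

variable {α : Type*} {n : ℕ}

def content (x : Fin n → α) : Multiset α := univ.val.map x

lemma card_content (x : Fin n → α) : Multiset.card (content x) = n := by
  simp [content]

lemma exists_content_eq (s : Multiset α) : ∃ n, ∃ x : Fin n → α, content x = s :=
  ⟨_, s.toList.get, by rw [content, Fin.univ_val_map, List.ofFn_get, Multiset.coe_toList]⟩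

lemma content_comp_perm (x : Fin n → α) (π : Equiv.Perm (Fin n)) :
    content (x ∘ π) = content x := by
  rw [content, ← Multiset.map_map, Multiset.map_univ_val_equiv, content]

lemma content_eq_cons (x : Fin n → α) (i : Fin n) :
    content x = x i ::ₘ (univ.erase i).val.map x := by
  rw [content, ← insert_erase (mem_univ i), insert_val_of_notMem (notMem_erase i univ),
    Multiset.map_cons, insert_erase (mem_univ i)]

variable [DecidableEq α]

lemma content_update (x : Fin n → α) (i : Fin n) (v : α) :
    content (Function.update x i v) = (v ::ₘ content x).erase (x i) := by
  rw [content_eq_cons (Function.update x i v) i, content_eq_cons x i, Function.update_self,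
    Multiset.cons_swap, Multiset.erase_cons_head]
  congr 1
  exact Multiset.map_congr rfl fun j hj =>
    Function.update_of_ne (ne_of_mem_erase (mem_def.mpr hj)) _ _

lemma count_content (x : Fin n → α) (a : α) : (content x).count a = #{i | x i = a} := by
  simp only [content, Multiset.count_map, card_def, filter_val, eq_comm]

lemma sum_ite_eq_count_mul {x : Fin n → α} {a : α} {F : Fin n → ℂ} {K : ℂ}
    (hF : ∀ i, x i = a → F i = K) :
    ∑ i, (if x i = a then F i else 0) = (content x).count a * K := by
  rw [← sum_filter, sum_congr rfl fun i hi => hF i (mem_filter.mp hi).2, sum_const,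
    nsmul_eq_mul, count_content]

lemma exists_perm_of_content_eq {x y : Fin n → α} (h : content x = content y) :
    ∃ π : Equiv.Perm (Fin n), y = x ∘ π := by
  have hcard (a : α) : Fintype.card {i // y i = a} = Fintype.card {i // x i = a} := by
    simp only [Fintype.card_subtype, ← count_content, h]
  exact ⟨Equiv.ofFiberEquiv fun a => Fintype.equivOfCardEq (hcard a),
    funext fun i => (Equiv.ofFiberEquiv_map _ i).symm⟩

lemma card_filter_comp_perm_eq [Fintype α] (x y : Fin n → α) :
    #{π : Equiv.Perm (Fin n) | y = x ∘ π} =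
      if content x = content y then ∏ a, ((content x).count a).factorial else 0 := by
  split_ifs with h
  · obtain ⟨π₀, rfl⟩ := exists_perm_of_content_eq h
    rw [← Fintype.card_subtype]
    calc Fintype.card {π : Equiv.Perm (Fin n) // x ∘ π₀ = x ∘ π}
        = Fintype.card {σ : Equiv.Perm (Fin n) // x ∘ σ = x} :=
          Fintype.card_congr <| Equiv.subtypeEquiv (Equiv.mulRight π₀⁻¹) fun π => by
            simp only [Equiv.coe_mulRight, Equiv.Perm.coe_mul, Equiv.Perm.inv_def,
              ← Function.comp_assoc, Equiv.comp_symm_eq]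
            exact eq_comm
      _ = ∏ a, ((content x).count a).factorial := by
          rw [DomMulAct.stabilizer_card]
          simp only [Fintype.card_subtype, count_content]
  · refine card_eq_zero.mpr (filter_eq_empty_iff.mpr fun π _ hπ => h ?_)
    rw [hπ, content_comp_perm]

lemma prod_factorial_count_cons [Fintype α] (a : α) (s : Multiset α) :
    ∏ b, (((a ::ₘ s).count b).factorial : ℂ) =
      (s.count a + 1) * ∏ b, ((s.count b).factorial : ℂ) := by
  rw [← mul_prod_erase _ _ (mem_univ a), ← mul_prod_erase _ _ (mem_univ a),
    Multiset.count_cons_self, Nat.factorial_succ,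
    prod_congr rfl fun b hb => by rw [Multiset.count_cons_of_ne (ne_of_mem_erase hb)]]
  push_cast
  ring

end Content

section Compactness

lemma isCompact_unitaryGroup (m 𝕜 : Type*) [Fintype m] [DecidableEq m] [RCLike 𝕜] :
    IsCompact (unitaryGroup m 𝕜 : Set (Matrix m m 𝕜)) := by
  refine (isCompact_univ_pi fun _ => isCompact_univ_pi fun _ => isCompact_closedBall (0 : 𝕜) 1)
    |>.of_isClosed_subset (isClosed_unitary (R := Matrix m m 𝕜)) fun U hU => ?_
  simpa using fun i j => entry_norm_bound_of_unitary hU i j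

instance (m 𝕜 : Type*) [Fintype m] [DecidableEq m] [RCLike 𝕜] :
    CompactSpace (unitaryGroup m 𝕜) :=
  isCompact_iff_compactSpace.mp (isCompact_unitaryGroup m 𝕜)

lemma Continuous.integrable_of_compactSpace {X E : Type*} [TopologicalSpace X] [CompactSpace X]
    [MeasurableSpace X] [OpensMeasurableSpace X] [NormedAddCommGroup E] {μ : Measure X}
    [IsFiniteMeasure μ] {f : X → E} (hf : Continuous f) : Integrable f μ :=
  hf.integrable_of_hasCompactSupport (isClosed_tsupport f).isCompact

end Compactness

section TensorPower

variable {d n : ℕ}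

lemma tpow_mul (A B : Matrix (Fin d) (Fin d) ℂ) :
    tpow d n (A * B) = tpow d n A * tpow d n B := by
  ext x y
  simp only [tpow, of_apply, mul_apply, prod_univ_sum, Fintype.piFinset_univ, prod_mul_distrib]

lemma tpow_one : tpow d n (1 : Matrix (Fin d) (Fin d) ℂ) = 1 := by
  ext x y
  simp only [tpow, of_apply, one_apply, prod_boole, funext_iff, mem_univ, true_imp_iff]

lemma tpow_conjTranspose (A : Matrix (Fin d) (Fin d) ℂ) : (tpow d n A)ᴴ = tpow d n Aᴴ := by
  ext x y
  simp [tpow, star_prod]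

lemma tpow_mem_unitaryGroup {U : Matrix (Fin d) (Fin d) ℂ} (hU : U ∈ unitaryGroup (Fin d) ℂ) :
    tpow d n U ∈ unitaryGroup (Fin n → Fin d) ℂ := by
  rw [mem_unitaryGroup_iff, star_eq_conjTranspose, tpow_conjTranspose, ← tpow_mul,
    ← star_eq_conjTranspose, mem_unitaryGroup_iff.mp hU, tpow_one]

@[fun_prop]
lemma continuous_tpow : Continuous (tpow d n) := by
  unfold tpow
  fun_prop

end TensorPower

section Twirl

lemma mul_of_integral_mul {α l m n o : Type*} [MeasurableSpace α] {μ : Measure α} [Fintype m]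
    [Fintype n] {F : α → Matrix m n ℂ} (hF : ∀ i j, Integrable (fun a => F a i j) μ)
    (A : Matrix l m ℂ) (B : Matrix n o ℂ) :
    A * (of fun i j => ∫ a, F a i j ∂μ) * B = of fun i j => ∫ a, (A * F a * B) i j ∂μ := by
  ext i j
  simp only [mul_apply, of_apply]
  rw [integral_finsetSum _ fun k _ =>
    (integrable_finsetSum _ fun l _ => (hF l k).const_mul _).mul_const _]
  refine sum_congr rfl fun k _ => ?_
  rw [integral_mul_const, integral_finsetSum _ fun l _ => (hF l k).const_mul _]
  simp only [integral_const_mul]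

lemma mul_single_mul_conjTranspose_apply {m : Type*} [Fintype m] [DecidableEq m]
    (A : Matrix m m ℂ) (w x y : m) :
    (A * Matrix.single w w (1 : ℂ) * Aᴴ) x y = A x w * star (A y w) := by
  simp [mul_apply, single_apply, ite_and]

variable {d n : ℕ} {q : Measure (UG d)}

lemma rhoWord_eq_of_integral (w : Fin n → Fin d) :
    rhoWord d n w q = of fun x y =>
      ∫ U : UG d, (tpow d n U * Matrix.single w w (1 : ℂ) * (tpow d n U)ᴴ) x y ∂q := by
  simp only [rhoWord, mul_single_mul_conjTranspose_apply]

variable [IsFiniteMeasure q] [q.IsMulLeftInvariant]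

lemma tpow_mul_rhoWord_mul_conjTranspose (w : Fin n → Fin d) (V : UG d) :
    tpow d n V * rhoWord d n w q * (tpow d n V)ᴴ = rhoWord d n w q := by
  rw [rhoWord_eq_of_integral,
    mul_of_integral_mul fun x y => (by fun_prop : Continuous _).integrable_of_compactSpace]
  congr with x y
  have hconj (U : UG d) :
      tpow d n V * (tpow d n U * Matrix.single w w (1 : ℂ) * (tpow d n U)ᴴ) * (tpow d n V)ᴴ =
        tpow d n ↑(V * U) * Matrix.single w w (1 : ℂ) * (tpow d n ↑(V * U))ᴴ := by
    simp only [Submonoid.coe_mul, tpow_mul, conjTranspose_mul, Matrix.mul_assoc]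
  simp only [hconj]
  exact integral_mul_left_eq_self (μ := q)
    (fun U : UG d => (tpow d n U * Matrix.single w w (1 : ℂ) * (tpow d n U)ᴴ) x y) V

lemma commute_tpow_rhoWord (w : Fin n → Fin d) (V : UG d) :
    Commute (tpow d n V) (rhoWord d n w q) := by
  have hV : (tpow d n V)ᴴ * tpow d n V = 1 := by
    rw [← star_eq_conjTranspose]
    exact mem_unitaryGroup_iff'.mp (tpow_mem_unitaryGroup V.2)
  calc tpow d n V * rhoWord d n w q
      = tpow d n V * rhoWord d n w q * ((tpow d n V)ᴴ * tpow d n V) := by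
        rw [hV, Matrix.mul_one]
    _ = rhoWord d n w q * tpow d n V := by
      rw [← Matrix.mul_assoc, tpow_mul_rhoWord_mul_conjTranspose]

end Twirl

section Derivation

lemma sum_prod_erase_one_mul {ι α R : Type*} [Fintype ι] [DecidableEq ι] [Fintype α]
    [DecidableEq α] [CommSemiring R] (i : ι) (y : ι → α) (f : (ι → α) → R) :
    ∑ z, (∏ j ∈ univ.erase i, (1 : Matrix α α R) (z j) (y j)) * f z =
      ∑ v, f (Function.update y i v) := by
  have hz (z : ι → α) : (∏ j ∈ univ.erase i, (1 : Matrix α α R) (z j) (y j)) * f z =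
      ∑ v, if Function.update y i v = z then f z else 0 := by
    rw [sum_eq_single (z i) (fun v _ hv => if_neg fun h => hv (by simp [← h])) (by simp)]
    simp [one_apply, prod_boole, Function.eq_update_iff, eq_comm]
  simp only [hz]
  rw [sum_comm]
  simp

variable {d n : ℕ}

/-- The derivative of `A ↦ A^{⊗n}` at `A = 1` in the direction `B`, that is
`∑ᵢ 1 ⊗ ⋯ ⊗ B ⊗ ⋯ ⊗ 1` with `B` in the `i`-th factor. -/
def tpowDeriv (n : ℕ) (B : Matrix (Fin d) (Fin d) ℂ) :
    Matrix (Fin n → Fin d) (Fin n → Fin d) ℂ :=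
  of fun x y =>
    ∑ i, (∏ j ∈ univ.erase i, (1 : Matrix (Fin d) (Fin d) ℂ) (x j) (y j)) * B (x i) (y i)

lemma hasDerivAt_tpow_apply {γ : ℝ → Matrix (Fin d) (Fin d) ℂ} {B : Matrix (Fin d) (Fin d) ℂ}
    (h0 : γ 0 = 1) (hγ : ∀ a b, HasDerivAt (fun θ => γ θ a b) (B a b) 0)
    (x y : Fin n → Fin d) :
    HasDerivAt (fun θ => tpow d n (γ θ) x y) (tpowDeriv n B x y) 0 := by
  simpa [tpow, tpowDeriv, h0] using
    HasDerivAt.fun_finsetProd (u := univ) fun i _ => hγ (x i) (y i)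

lemma commute_tpowDeriv_of_commute_tpow {γ : ℝ → Matrix (Fin d) (Fin d) ℂ}
    {B : Matrix (Fin d) (Fin d) ℂ} (h0 : γ 0 = 1)
    (hγ : ∀ a b, HasDerivAt (fun θ => γ θ a b) (B a b) 0)
    {ρ : Matrix (Fin n → Fin d) (Fin n → Fin d) ℂ} (hρ : ∀ θ, Commute (tpow d n (γ θ)) ρ) :
    Commute (tpowDeriv n B) ρ := by
  ext x y
  have hleft : HasDerivAt (fun θ => (tpow d n (γ θ) * ρ) x y) ((tpowDeriv n B * ρ) x y) 0 := by
    simp only [mul_apply]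
    exact HasDerivAt.fun_sum fun z _ => (hasDerivAt_tpow_apply h0 hγ x z).mul_const _
  have hright : HasDerivAt (fun θ => (ρ * tpow d n (γ θ)) x y) ((ρ * tpowDeriv n B) x y) 0 := by
    simp only [mul_apply]
    exact HasDerivAt.fun_sum fun z _ => (hasDerivAt_tpow_apply h0 hγ z y).const_mul _
  simp only [fun θ => (hρ θ).eq] at hleft
  exact hleft.unique hright

open NormedSpace in
lemma exp_smul_mem_unitaryGroup {B : Matrix (Fin d) (Fin d) ℂ} (hB : B ∈ skewAdjoint _)
    (θ : ℝ) : exp (θ • B) ∈ unitaryGroup (Fin d) ℂ := by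
  rw [mem_unitaryGroup_iff, star_eq_conjTranspose, ← exp_conjTranspose, ← star_eq_conjTranspose,
    skewAdjoint.mem_iff.mp (skewAdjoint.smul_mem θ hB), Matrix.exp_neg]
  exact mul_nonsing_inv _ ((isUnit_iff_isUnit_det _).mp (isUnit_exp _))

open NormedSpace in
lemma hasDerivAt_exp_smul_apply (B : Matrix (Fin d) (Fin d) ℂ) (a b : Fin d) :
    HasDerivAt (fun θ : ℝ => exp (θ • B) a b) (B a b) 0 := by
  -- any Banach-algebra norm on matrices will do; it is only needed to invoke the lemma below
  let := Matrix.linftyOpNormedRing (n := Fin d) (α := ℂ)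
  let := Matrix.linftyOpNormedAlgebra (n := Fin d) (α := ℂ) (R := ℝ)
  have h := hasDerivAt_exp_smul_const (𝕂 := ℝ) B (0 : ℝ)
  rw [zero_smul, exp_zero, one_mul] at h
  exact hasDerivAt_pi.mp (hasDerivAt_pi.mp h a) b

lemma commute_tpowDeriv {ρ : Matrix (Fin n → Fin d) (Fin n → Fin d) ℂ}
    (hρ : ∀ V : UG d, Commute (tpow d n V) ρ) {B : Matrix (Fin d) (Fin d) ℂ}
    (hB : B ∈ skewAdjoint _) : Commute (tpowDeriv n B) ρ :=
  commute_tpowDeriv_of_commute_tpow (by simp) (hasDerivAt_exp_smul_apply B)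
    fun θ => hρ ⟨_, exp_smul_mem_unitaryGroup hB θ⟩

lemma mul_tpowDeriv_apply (ρ : Matrix (Fin n → Fin d) (Fin n → Fin d) ℂ)
    (B : Matrix (Fin d) (Fin d) ℂ) (x y : Fin n → Fin d) :
    (ρ * tpowDeriv n B) x y = ∑ i, ∑ v, ρ x (Function.update y i v) * B v (y i) := by
  simp only [mul_apply, tpowDeriv, of_apply, mul_sum]
  rw [sum_comm]
  refine sum_congr rfl fun i _ => ?_
  simpa [mul_left_comm] using sum_prod_erase_one_mul i y fun z => ρ x z * B (z i) (y i)

lemma tpowDeriv_mul_apply (ρ : Matrix (Fin n → Fin d) (Fin n → Fin d) ℂ)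
    (B : Matrix (Fin d) (Fin d) ℂ) (x y : Fin n → Fin d) :
    (tpowDeriv n B * ρ) x y = ∑ i, ∑ v, B (x i) v * ρ (Function.update x i v) y := by
  simp only [mul_apply, tpowDeriv, of_apply, sum_mul]
  rw [sum_comm]
  refine sum_congr rfl fun i _ => ?_
  simpa [mul_assoc, one_apply, eq_comm] using
    sum_prod_erase_one_mul i x fun z => B (x i) (z i) * ρ z y

lemma tpowDeriv_sub (A B : Matrix (Fin d) (Fin d) ℂ) :
    tpowDeriv n (A - B) = tpowDeriv n A - tpowDeriv n B := by
  ext x y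
  simp [tpowDeriv, mul_sub]

lemma tpowDeriv_single_mul_apply (ρ : Matrix (Fin n → Fin d) (Fin n → Fin d) ℂ) (a b : Fin d)
    (c : ℂ) (x y : Fin n → Fin d) :
    (tpowDeriv n (Matrix.single a b c) * ρ) x y =
      c * ∑ i, if x i = a then ρ (Function.update x i b) y else 0 := by
  simp [tpowDeriv_mul_apply, single_apply, ite_and, mul_sum, eq_comm]

lemma mul_tpowDeriv_single_apply (ρ : Matrix (Fin n → Fin d) (Fin n → Fin d) ℂ) (a b : Fin d)
    (c : ℂ) (x y : Fin n → Fin d) :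
    (ρ * tpowDeriv n (Matrix.single a b c)) x y =
      c * ∑ i, if y i = b then ρ x (Function.update y i a) else 0 := by
  simp [mul_tpowDeriv_apply, single_apply, ite_and, mul_sum, eq_comm, mul_comm]

lemma single_I_mem_skewAdjoint (a : Fin d) :
    Matrix.single a a Complex.I ∈ skewAdjoint (Matrix (Fin d) (Fin d) ℂ) := by
  rw [skewAdjoint.mem_iff, star_eq_conjTranspose, conjTranspose_single, Complex.star_def,
    Complex.conj_I, single_neg]

lemma single_sub_single_mem_skewAdjoint (a b : Fin d) :
    Matrix.single a b (1 : ℂ) - Matrix.single b a 1 ∈ skewAdjoint (Matrix (Fin d) (Fin d) ℂ) := by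
  rw [skewAdjoint.mem_iff, star_eq_conjTranspose, conjTranspose_sub, conjTranspose_single,
    conjTranspose_single, star_one, neg_sub]

end Derivation

section Commutant

variable {d n : ℕ} {ρ : Matrix (Fin n → Fin d) (Fin n → Fin d) ℂ}

lemma apply_eq_zero_of_content_ne (hρ : ∀ V : UG d, Commute (tpow d n V) ρ)
    {x y : Fin n → Fin d} (h : content x ≠ content y) : ρ x y = 0 := by
  obtain ⟨a, ha⟩ : ∃ a, (content x).count a ≠ (content y).count a := by
    by_contra! h'
    exact h (Multiset.ext.mpr h')
  have key := congrFun (congrFun (commute_tpowDeriv hρ (single_I_mem_skewAdjoint a)).eq x) y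
  rw [tpowDeriv_single_mul_apply, mul_tpowDeriv_single_apply,
    sum_ite_eq_count_mul fun i hi => by rw [← hi, Function.update_eq_self],
    sum_ite_eq_count_mul fun i hi => by rw [← hi, Function.update_eq_self]] at key
  by_contra hρxy
  exact ha (by exact_mod_cast mul_right_cancel₀ hρxy (mul_left_cancel₀ Complex.I_ne_zero key))

lemma count_mul_eq_count_mul_of_commute (hρ : ∀ V : UG d, Commute (tpow d n V) ρ)
    {g : Multiset (Fin d) → ℂ}
    (hg : ∀ x y, ρ x y = if content x = content y then g (content x) else 0)
    {a b : Fin d} (hab : a ≠ b) {r : Multiset (Fin d)} {x : Fin n → Fin d}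
    (hx : content x = a ::ₘ r) {i : Fin n} (hi : x i = a) :
    ((r.count b : ℂ) + 1) * g (a ::ₘ r) = ((r.count a : ℂ) + 1) * g (b ::ₘ r) := by
  set y := Function.update x i b
  have hy : content y = b ::ₘ r := by
    rw [content_update, hx, hi, Multiset.cons_swap, Multiset.erase_cons_head]
  have h1 (j) (hj : x j = a) : ρ (Function.update x j b) y = g (b ::ₘ r) := by
    rw [hg, content_update, hj, hx, hy, Multiset.erase_cons_tail _ hab.symm,
      Multiset.erase_cons_head, if_pos rfl]
  have h2 (j) (hj : x j = b) : ρ (Function.update x j a) y = 0 := by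
    rw [hg, content_update, hj, hx, hy, if_neg]
    intro h
    have := congrArg (Multiset.count a) h
    simp [hab] at this
    omega
  have h3 (j) (hj : y j = b) : ρ x (Function.update y j a) = g (a ::ₘ r) := by
    rw [hg, content_update, hj, hx, hy, Multiset.erase_cons_tail _ hab, Multiset.erase_cons_head,
      if_pos rfl]
  have h4 (j) (hj : y j = a) : ρ x (Function.update y j b) = 0 := by
    rw [hg, content_update, hj, hx, hy, if_neg]
    intro h
    have := congrArg (Multiset.count a) h
    simp [hab] at this
    omega
  -- in the `(x, y)` entry of `D ρ = ρ D`, `D` the derived action of `E_ab - E_ba`, only the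
  -- terms `h1` and `h3` survive
  have key := congrFun (congrFun
    (commute_tpowDeriv hρ (single_sub_single_mem_skewAdjoint a b)).eq x) y
  rw [tpowDeriv_sub, Matrix.sub_mul, Matrix.mul_sub, Matrix.sub_apply, Matrix.sub_apply,
    tpowDeriv_single_mul_apply, tpowDeriv_single_mul_apply, mul_tpowDeriv_single_apply,
    mul_tpowDeriv_single_apply, sum_ite_eq_count_mul h1, sum_ite_eq_count_mul h2,
    sum_ite_eq_count_mul h3, sum_ite_eq_count_mul h4, hx, hy, Multiset.count_cons_self,
    Multiset.count_cons_self] at key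
  push_cast at key
  linear_combination -key

end Commutant

section Moments

variable {d : ℕ} (q : Measure (UG d)) (c : Fin d)

def columnMoment (s t : Multiset (Fin d)) : ℂ :=
  ∫ U : UG d, (s.map fun a => (U : Matrix (Fin d) (Fin d) ℂ) a c).prod *
    star (t.map fun a => (U : Matrix (Fin d) (Fin d) ℂ) a c).prod ∂q

lemma rhoWord_const_eq_columnMoment {n : ℕ} (x y : Fin n → Fin d) :
    rhoWord d n (fun _ => c) q x y = columnMoment q c (content x) (content y) := by
  simp [rhoWord, tpow, columnMoment, content, prod_eq_multiset_prod, Function.comp_def]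

lemma sum_mul_star_apply_eq_one (U : UG d) :
    ∑ a, (U : Matrix (Fin d) (Fin d) ℂ) a c * star ((U : Matrix (Fin d) (Fin d) ℂ) a c) = 1 := by
  simpa [mul_apply, mul_comm] using congrFun (congrFun (UnitaryGroup.star_mul_self U) c) c

lemma continuous_columnMoment_integrand (s t : Multiset (Fin d)) :
    Continuous fun U : UG d => (s.map fun a => (U : Matrix (Fin d) (Fin d) ℂ) a c).prod *
      star (t.map fun a => (U : Matrix (Fin d) (Fin d) ℂ) a c).prod := by
  have (s : Multiset (Fin d)) :
      Continuous fun U : UG d => (s.map fun a => (U : Matrix (Fin d) (Fin d) ℂ) a c).prod :=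
    continuous_multiset_prod s fun a _ => continuous_subtype_val.matrix_elem a c
  exact (this s).mul (this t).star

variable [IsProbabilityMeasure q]

lemma columnMoment_zero : columnMoment q c 0 0 = 1 := by
  simp [columnMoment]

lemma sum_columnMoment_cons (s : Multiset (Fin d)) :
    ∑ a, columnMoment q c (a ::ₘ s) (a ::ₘ s) = columnMoment q c s s := by
  refine (integral_finsetSum _ fun a _ =>
    (continuous_columnMoment_integrand c _ _).integrable_of_compactSpace).symm.trans
    (integral_congr_ae (ae_of_all _ fun U => ?_))
  set u := fun a => (U : Matrix (Fin d) (Fin d) ℂ) a c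
  set P := (s.map u).prod
  calc ∑ a, ((a ::ₘ s).map u).prod * star ((a ::ₘ s).map u).prod
      = (∑ a, u a * star (u a)) * (P * star P) := by
        simp only [Multiset.map_cons, Multiset.prod_cons, star_mul, sum_mul]
        exact sum_congr rfl fun a _ => by ring
    _ = P * star P := by rw [sum_mul_star_apply_eq_one, one_mul]

variable [q.IsMulLeftInvariant]

lemma rhoWord_const_apply {n : ℕ} (x y : Fin n → Fin d) :
    rhoWord d n (fun _ => c) q x y =
      if content x = content y then columnMoment q c (content x) (content x) else 0 := by
  split_ifs with h
  · rw [rhoWord_const_eq_columnMoment, h]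
  · exact apply_eq_zero_of_content_ne (commute_tpow_rhoWord _) h

lemma columnMoment_cons_relation (a b : Fin d) (r : Multiset (Fin d)) :
    ((r.count b : ℂ) + 1) * columnMoment q c (a ::ₘ r) (a ::ₘ r) =
      ((r.count a : ℂ) + 1) * columnMoment q c (b ::ₘ r) (b ::ₘ r) := by
  obtain rfl | hab := eq_or_ne a b
  · rfl
  obtain ⟨n, x, hx⟩ := exists_content_eq (a ::ₘ r)
  obtain ⟨i, -, hi⟩ := Multiset.mem_map.mp (hx ▸ Multiset.mem_cons_self a r : a ∈ content x)
  exact count_mul_eq_count_mul_of_commute (commute_tpow_rhoWord _)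
    (g := fun s => columnMoment q c s s) (rhoWord_const_apply q c) hab hx hi

lemma columnMoment_self (s : Multiset (Fin d)) :
    columnMoment q c s s =
      (∏ a, ((s.count a).factorial : ℂ)) * (d - 1).factorial / (s.card + d - 1).factorial := by
  induction s using Multiset.induction with
  | empty => simp [columnMoment_zero, Nat.factorial_ne_zero]
  | cons a r ih =>
    have hd : 0 < d := a.pos
    have hsum : columnMoment q c r r * (r.count a + 1) =
        columnMoment q c (a ::ₘ r) (a ::ₘ r) * (r.card + d) := by
      calc columnMoment q c r r * (r.count a + 1)
          = ∑ b, columnMoment q c (b ::ₘ r) (b ::ₘ r) * (r.count a + 1) := by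
            rw [← sum_columnMoment_cons, sum_mul]
        _ = ∑ b, columnMoment q c (a ::ₘ r) (a ::ₘ r) * (r.count b + 1) :=
            sum_congr rfl fun b _ => by
              linear_combination (columnMoment_cons_relation q c a b r).symm
        _ = columnMoment q c (a ::ₘ r) (a ::ₘ r) * (r.card + d) := by
            rw [← mul_sum, sum_add_distrib, ← Nat.cast_sum,
              Multiset.sum_count_eq_card fun b _ => mem_univ b]
            simp
    have hfact : ((r.card + 1 + d - 1).factorial : ℂ) =
        (r.card + d) * (r.card + d - 1).factorial := by
      rw [show r.card + 1 + d - 1 = (r.card + d - 1) + 1 by omega, Nat.factorial_succ,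
        show r.card + d - 1 + 1 = r.card + d by omega]
      push_cast
      ring
    rw [ih, div_mul_eq_mul_div, div_eq_iff (by positivity)] at hsum
    rw [prod_factorial_count_cons, Multiset.card_cons, hfact, eq_div_iff (by positivity)]
    linear_combination -hsum

end Moments

lemma word_muEq (d n : ℕ) (hd : 0 < d) :
    word d n (muEq d n hd) (muEq_sum d n hd) = fun _ => ⟨0, hd⟩ := by
  funext j
  have h : word d n (muEq d n hd) (muEq_sum d n hd) j ∈ wordList d (muEq d n hd) :=
    List.get_mem _ _
  simp only [wordList, List.mem_flatten, List.mem_ofFn] at h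
  obtain ⟨_, ⟨i, rfl⟩, h⟩ := h
  obtain ⟨hne, hi⟩ := List.mem_replicate.mp h
  rw [hi]
  by_contra h
  simp [muEq, h] at hne

lemma symmetrizer_apply (d n : ℕ) (x y : Fin n → Fin d) :
    symmetrizer d n x y = if content x = content y
      then (∏ a, (((content x).count a).factorial : ℂ)) / n.factorial else 0 := by
  rw [symmetrizer, Matrix.smul_apply, Matrix.sum_apply]
  simp only [psi, of_apply, sum_boole, card_filter_comp_perm_eq, smul_eq_mul]
  split_ifs <;> simp [div_eq_inv_mul]

/-- `∫ U^{⊗n} |e_(n)⟩⟨e_(n)| (U^{⊗n})^† dU = Π_{(n)} / binom(n+d-1, n)`. -/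
theorem haar_average_constant_word (d n : ℕ) (hd : 1 ≤ d)
    (haar : Measure (UG d)) [IsProbabilityMeasure haar]
    (hinv : ∀ V : UG d, Measure.map (fun U => V * U) haar = haar) :
    rhoEQ d n (by omega) haar = (((n + d - 1).choose n : ℂ))⁻¹ • symmetrizer d n := by
  have : haar.IsMulLeftInvariant := ⟨hinv⟩
  have hchoose : ((n + d - 1).choose n * n.factorial * (d - 1).factorial : ℂ) =
      (n + d - 1).factorial := by
    rw [show d - 1 = n + d - 1 - n by omega]
    exact_mod_cast Nat.choose_mul_factorial_mul_factorial (by omega)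
  ext x y
  rw [rhoEQ, rhoNE, word_muEq, rhoWord_const_apply, Matrix.smul_apply, symmetrizer_apply,
    columnMoment_self, card_content]
  split_ifs
  · rw [smul_eq_mul, ← hchoose]
    field_simp
  · simp

end
end

section
/- For all natural numbers m and all h with 0 ≤ h ≤ 2^m, the sequence γ satisfies the symmetry γ(h, m) = γ(2^m − h, m). -/
/-!
Read for all `h`, the recurrence says that `γ(·, m+1)` is the half self-convolution
`h ↦ ∑_{k ≤ h/2} γ(k, m) γ(h - k, m)` of `γ(·, m)`, and `γ(·, m)` vanishes beyond `2^m`.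
The half self-convolution of a sequence that is supported on `[0, N]` and symmetric under
`i ↦ N - i` is symmetric under `h ↦ 2N - h`, so the symmetry passes from `m` to `m + 1`.
-/

open Finset

/-- The recursively defined quantity `γ(h, m)` bounding the soundness of the
Iterated Swap Tree: `γ(0,m) = γ(1,m) = 1`, `γ(h,0) = 0` for `h ≥ 2`, and
`γ(h, m) = ∑_{k=0}^{⌊h/2⌋} γ(k, m-1) γ(h-k, m-1)` for `h ≥ 2`, `m ≥ 1`. -/
def gamma : ℕ → ℕ → ℚ
  | 0, _ => 1
  | 1, _ => 1
  | _ + 2, 0 => 0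
  | h + 2, m + 1 => ∑ k ∈ Finset.range ((h + 2) / 2 + 1), gamma k m * gamma (h + 2 - k) m
  termination_by h m => m

section HalfConv

variable {R : Type*} [CommSemiring R]

def halfConv (a : ℕ → R) (h : ℕ) : R :=
  ∑ k ∈ range (h / 2 + 1), a k * a (h - k)

variable {a : ℕ → R} {N : ℕ}

/-- For `h ≤ N`, the reflection `k ↦ N - h + k` matches the terms of the half-sum at `2N - h`
with those at `h`; the terms with `k < N - h` vanish because then `2N - h - k > N`. -/
lemma halfConv_two_mul_sub_of_le (hsymm : ∀ i ≤ N, a i = a (N - i))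
    (hsupp : ∀ i, N < i → a i = 0) {h : ℕ} (hh : h ≤ N) :
    halfConv a (2 * N - h) = halfConv a h := by
  have hlen : (2 * N - h) / 2 + 1 = (N - h) + (h / 2 + 1) := by omega
  rw [halfConv, hlen, sum_range_add, halfConv]
  have hvanish : ∑ k ∈ range (N - h), a k * a (2 * N - h - k) = 0 :=
    sum_eq_zero fun k hk => by
      rw [hsupp (2 * N - h - k) (by have := mem_range.1 hk; omega), mul_zero]
  rw [hvanish, zero_add]
  refine sum_congr rfl fun j hj => ?_
  have hj : j ≤ h / 2 := Nat.lt_succ_iff.1 (mem_range.1 hj)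
  rw [hsymm (N - h + j) (by omega), hsymm (2 * N - h - (N - h + j)) (by omega),
    show N - (N - h + j) = h - j by omega, show N - (2 * N - h - (N - h + j)) = j by omega,
    mul_comm]

lemma halfConv_two_mul_sub (hsymm : ∀ i ≤ N, a i = a (N - i))
    (hsupp : ∀ i, N < i → a i = 0) {h : ℕ} (hh : h ≤ 2 * N) :
    halfConv a (2 * N - h) = halfConv a h := by
  rcases le_total h N with hle | hle
  · exact halfConv_two_mul_sub_of_le hsymm hsupp hle
  · have := halfConv_two_mul_sub_of_le hsymm hsupp (h := 2 * N - h) (by omega)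
    rwa [Nat.sub_sub_self hh, eq_comm] at this

end HalfConv

/-- The recurrence also holds for `h = 0, 1`, where the half-sum is `γ(0)γ(h)`. -/
lemma gamma_succ (h m : ℕ) : gamma h (m + 1) = halfConv (gamma · m) h := by
  match h with
  | 0 | 1 => simp [halfConv, gamma]
  | h + 2 => rw [gamma, halfConv]

lemma gamma_eq_zero_of_two_pow_lt {h m : ℕ} (hh : 2 ^ m < h) : gamma h m = 0 := by
  induction m generalizing h with
  | zero =>
    obtain ⟨t, rfl⟩ : ∃ t, h = t + 2 := ⟨h - 2, by rw [pow_zero] at hh; omega⟩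
    rw [gamma]
  | succ m ih =>
    rw [gamma_succ, halfConv]
    refine sum_eq_zero fun k hk => ?_
    have hk : k ≤ h / 2 := Nat.lt_succ_iff.1 (mem_range.1 hk)
    rw [ih (h := h - k) (by rw [pow_succ] at hh; omega), mul_zero]

/-- The symmetry `γ(h, m) = γ(2^m − h, m)` for `0 ≤ h ≤ 2^m`. -/
theorem gamma_symm (m h : ℕ) (hh : h ≤ 2 ^ m) : gamma h m = gamma (2 ^ m - h) m := by
  induction m generalizing h with
  | zero =>
    interval_cases h <;> simp [gamma]
  | succ m ih =>
    rw [pow_succ'] at hh ⊢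
    rw [gamma_succ, gamma_succ,
      halfConv_two_mul_sub ih (fun _ => gamma_eq_zero_of_two_pow_lt) hh]
end

section
/- For every integer h ≥ 1, there exists a polynomial p with rational coefficients of degree exactly h − 1 such that γ(h, m) = p(m) for every natural number m. -/
section GammaPolyAux
open Polynomial Finset

/-- Finite difference of the descending Pochhammer polynomial. -/
lemma desc_diff (k : ℕ) (x : ℚ) :
    (descPochhammer ℚ (k+1)).eval (x+1) - (descPochhammer ℚ (k+1)).eval x
      = (k+1) * (descPochhammer ℚ k).eval x := by
  have h1 : (descPochhammer ℚ (k+1)).eval (x+1) = (x+1) * (descPochhammer ℚ k).eval x := by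
    rw [descPochhammer_succ_left]
    simp [eval_comp]
  have h2 : (descPochhammer ℚ (k+1)).eval x = (descPochhammer ℚ k).eval x * (x - k) := by
    rw [descPochhammer_succ_right]
    simp
  rw [h1, h2]; ring

/-- Weak discrete antiderivative existence. -/
lemma antideriv_weak : ∀ n : ℕ, ∀ q : Polynomial ℚ, q.degree < (n : ℕ) →
    ∃ p : Polynomial ℚ, p.degree ≤ (n : ℕ) ∧
      ∀ x : ℚ, p.eval (x+1) - p.eval x = q.eval x := by
  intro n
  induction n with
  | zero =>
    intro q hq
    have hq0 : q = 0 := by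
      rw [← degree_eq_bot]
      exact Nat.WithBot.lt_zero_iff.mp (by exact_mod_cast hq)
    subst hq0
    exact ⟨0, by simp, by simp⟩
  | succ n ih =>
    intro q hq
    set c := q.coeff n with hc
    set q' := q - C c * descPochhammer ℚ n with hq'def
    have hdn : (descPochhammer ℚ n).natDegree = n := descPochhammer_natDegree ℚ n
    have hmon : (descPochhammer ℚ n).Monic := monic_descPochhammer ℚ n
    have hq'lt : q'.degree < (n : ℕ) := by
      rw [degree_lt_iff_coeff_zero]
      intro m hm
      rcases eq_or_lt_of_le hm with hm' | hm'
      · subst hm'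
        have h1 := hmon.coeff_natDegree
        rw [hdn] at h1
        simp [hq'def, h1, hc]
      · have h1 : q.coeff m = 0 :=
          coeff_eq_zero_of_degree_lt (lt_of_lt_of_le hq (by exact_mod_cast hm'))
        have h2 : (descPochhammer ℚ n).coeff m = 0 :=
          coeff_eq_zero_of_natDegree_lt (by omega)
        simp [hq'def, h1, h2]
    obtain ⟨p', hp'le, hp'⟩ := ih q' hq'lt
    refine ⟨C (c / (n+1)) * descPochhammer ℚ (n+1) + p', ?_, ?_⟩
    · refine (degree_add_le _ _).trans (max_le ?_ (hp'le.trans (by exact_mod_cast Nat.cast_le.2 (Nat.le_succ n))))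
      calc (C (c / (n+1)) * descPochhammer ℚ (n+1)).degree
          ≤ (C (c / (n+1))).degree + (descPochhammer ℚ (n+1)).degree := degree_mul_le _ _
        _ ≤ 0 + ((n+1 : ℕ) : WithBot ℕ) :=
            add_le_add degree_C_le
              (degree_le_natDegree.trans_eq (by rw [descPochhammer_natDegree]))
        _ = ((n+1 : ℕ) : WithBot ℕ) := zero_add _
    · intro x
      have hcast : ((n : ℚ) + 1) ≠ 0 := by positivity
      have hd := desc_diff n x
      have hq'x := hp' x
      simp only [eval_add, eval_mul, eval_C, hq'def, eval_sub] at hq'x ⊢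
      have hkey : c / ((n:ℚ)+1) * ((descPochhammer ℚ (n+1)).eval (x+1)
          - (descPochhammer ℚ (n+1)).eval x) = c * (descPochhammer ℚ n).eval x := by
        rw [hd]; field_simp
      linarith [hkey, hq'x]

/-- Discrete antiderivative with degree and leading coefficient control. -/
lemma antideriv (q : Polynomial ℚ) (hq : q ≠ 0) :
    ∃ p : Polynomial ℚ, p.degree = ((q.natDegree + 1 : ℕ) : WithBot ℕ) ∧
      p.leadingCoeff = q.leadingCoeff / (q.natDegree + 1) ∧
      ∀ x : ℚ, p.eval (x+1) - p.eval x = q.eval x := by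
  set n := q.natDegree with hn
  set c := q.leadingCoeff with hc
  have hc0 : c ≠ 0 := leadingCoeff_ne_zero.mpr hq
  have hn1 : ((n : ℚ) + 1) ≠ 0 := by positivity
  have ha0 : c / ((n : ℚ) + 1) ≠ 0 := div_ne_zero hc0 hn1
  have hdn : (descPochhammer ℚ n).natDegree = n := descPochhammer_natDegree ℚ n
  have hdn1 : (descPochhammer ℚ (n+1)).natDegree = n + 1 := descPochhammer_natDegree ℚ (n+1)
  have hmon : (descPochhammer ℚ n).Monic := monic_descPochhammer ℚ n
  have hmon1 : (descPochhammer ℚ (n+1)).Monic := monic_descPochhammer ℚ (n+1)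
  set q' := q - C c * descPochhammer ℚ n with hq'def
  have hq'lt : q'.degree < (n : ℕ) := by
    rw [degree_lt_iff_coeff_zero]
    intro m hm
    rcases eq_or_lt_of_le hm with hm' | hm'
    · subst hm'
      have h1 := hmon.coeff_natDegree
      rw [hdn] at h1
      have h2 : q.coeff n = c := by rw [hc, leadingCoeff, ← hn]
      simp [hq'def, h1, h2]
    · have h1 : q.coeff m = 0 := coeff_eq_zero_of_natDegree_lt (by omega)
      have h2 : (descPochhammer ℚ n).coeff m = 0 :=
        coeff_eq_zero_of_natDegree_lt (by omega)
      simp [hq'def, h1, h2]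
  obtain ⟨p', hp'le, hp'⟩ := antideriv_weak n q' hq'lt
  set a := c / ((n : ℚ) + 1) with hadef
  have hdegCd : (C a * descPochhammer ℚ (n+1)).degree = ((n+1 : ℕ) : WithBot ℕ) := by
    rw [degree_mul, degree_C ha0, degree_eq_natDegree hmon1.ne_zero, hdn1, zero_add]
  have hp'lt : p'.degree < (C a * descPochhammer ℚ (n+1)).degree := by
    rw [hdegCd]
    exact lt_of_le_of_lt hp'le (by exact_mod_cast Nat.lt_succ_self n)
  refine ⟨C a * descPochhammer ℚ (n+1) + p', ?_, ?_, ?_⟩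
  · rw [degree_add_eq_left_of_degree_lt hp'lt, hdegCd]
  · have hdeg : (C a * descPochhammer ℚ (n+1) + p').natDegree = n + 1 := by
      apply natDegree_eq_of_degree_eq_some
      rw [degree_add_eq_left_of_degree_lt hp'lt, hdegCd]
    rw [leadingCoeff, hdeg]
    have h1 := hmon1.coeff_natDegree
    rw [hdn1] at h1
    have h2 : p'.coeff (n+1) = 0 :=
      coeff_eq_zero_of_degree_lt (lt_of_le_of_lt hp'le (by exact_mod_cast Nat.lt_succ_self n))
    simp [coeff_add, coeff_C_mul, h1, h2, hadef]
  · intro x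
    have hd := desc_diff n x
    have hq'x := hp' x
    simp only [eval_add, eval_mul, eval_C, hq'def, eval_sub] at hq'x ⊢
    have hkey : a * ((descPochhammer ℚ (n+1)).eval (x+1)
        - (descPochhammer ℚ (n+1)).eval x) = c * (descPochhammer ℚ n).eval x := by
      rw [hd, hadef]; field_simp
    linarith [hkey, hq'x]

lemma gamma_poly_aux : ∀ h : ℕ, 1 ≤ h → ∃ p : Polynomial ℚ,
    p.degree = ((h - 1 : ℕ) : WithBot ℕ) ∧ 0 < p.leadingCoeff ∧
      ∀ m : ℕ, gamma h m = p.eval (m : ℚ) := by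
  intro h
  induction h using Nat.strong_induction_on with
  | _ h ih =>
  intro hh
  match h, hh with
  | 1, _ =>
    refine ⟨1, by simp, by simp, fun m => ?_⟩
    rw [gamma]; simp
  | (n+2), _ =>
    -- gather polynomials for smaller indices
    have ihs : ∀ j : ℕ, ∃ p : Polynomial ℚ, 1 ≤ j → j < n + 2 →
        p.degree = ((j - 1 : ℕ) : WithBot ℕ) ∧ 0 < p.leadingCoeff ∧
          ∀ m : ℕ, gamma j m = p.eval (m : ℚ) := by
      intro j
      by_cases hj : 1 ≤ j ∧ j < n + 2
      · obtain ⟨p, hp⟩ := ih j hj.2 hj.1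
        exact ⟨p, fun _ _ => hp⟩
      · exact ⟨0, fun h1 h2 => absurd ⟨h1, h2⟩ hj⟩
    choose g hg using ihs
    set T := (n + 2) / 2 with hT
    have hT1 : 1 ≤ T := by omega
    set Q : Polynomial ℚ :=
      g (n+1) + ∑ k ∈ Finset.range (T - 1), g (k+2) * g (n + 2 - (k+2)) with hQdef
    -- properties of summand indices
    have hidx : ∀ k ∈ Finset.range (T - 1),
        (1 ≤ k + 2 ∧ k + 2 < n + 2) ∧ (1 ≤ n + 2 - (k+2) ∧ n + 2 - (k+2) < n + 2) := by
      intro k hk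
      rw [Finset.mem_range] at hk
      omega
    -- each summand has degree exactly n and positive leading coefficient
    have hterm : ∀ k ∈ Finset.range (T - 1),
        (g (k+2) * g (n + 2 - (k+2))).degree = (n : WithBot ℕ) ∧
          0 < (g (k+2) * g (n + 2 - (k+2))).leadingCoeff := by
      intro k hk
      obtain ⟨⟨ha1, ha2⟩, ⟨hb1, hb2⟩⟩ := hidx k hk
      obtain ⟨hd1, hl1, _⟩ := hg (k+2) ha1 ha2
      obtain ⟨hd2, hl2, _⟩ := hg (n + 2 - (k+2)) hb1 hb2
      constructor
      · rw [degree_mul, hd1, hd2, ← Nat.cast_add]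
        congr 1
        rw [Finset.mem_range] at hk
        omega
      · rw [leadingCoeff_mul]
        exact mul_pos hl1 hl2
    obtain ⟨hgd, hgl, hge⟩ := hg (n+1) (by omega) (by omega)
    have hgd' : (g (n+1)).degree = (n : WithBot ℕ) := by
      rw [hgd]; congr 1
    -- coefficient extraction helper
    have hco : ∀ p : Polynomial ℚ, p.degree = (n : WithBot ℕ) → p.coeff n = p.leadingCoeff := by
      intro p hp
      rw [leadingCoeff, natDegree_eq_of_degree_eq_some hp]
    -- degree bound for Q
    have hQle : Q.degree ≤ (n : WithBot ℕ) := by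
      rw [hQdef]
      refine (degree_add_le _ _).trans (max_le (le_of_eq hgd') ?_)
      refine (degree_sum_le _ _).trans ?_
      refine Finset.sup_le fun k hk => le_of_eq (hterm k hk).1
    -- positive coefficient at n
    have hQco : 0 < Q.coeff n := by
      rw [hQdef, coeff_add, finset_sum_coeff]
      have h1 : 0 < (g (n+1)).coeff n := by rw [hco _ hgd']; exact hgl
      have h2 : 0 ≤ ∑ k ∈ Finset.range (T - 1), (g (k+2) * g (n + 2 - (k+2))).coeff n := by
        refine Finset.sum_nonneg fun k hk => ?_
        rw [hco _ (hterm k hk).1]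
        exact le_of_lt (hterm k hk).2
      linarith
    have hQne : Q ≠ 0 := fun h0 => by simp [h0] at hQco
    have hQdeg : Q.degree = (n : WithBot ℕ) :=
      le_antisymm hQle (le_degree_of_ne_zero (ne_of_gt hQco))
    have hQnat : Q.natDegree = n := natDegree_eq_of_degree_eq_some hQdeg
    have hQlc : 0 < Q.leadingCoeff := by rwa [leadingCoeff, hQnat]
    -- the recurrence: gamma (n+2) (m+1) = gamma (n+2) m + Q.eval m
    have hrec : ∀ m : ℕ, gamma (n+2) (m+1) = gamma (n+2) m + Q.eval (m : ℚ) := by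
      intro m
      rw [gamma]
      have hsplit : (n + 2) / 2 + 1 = (T - 1) + 1 + 1 := by omega
      rw [hsplit, Finset.sum_range_succ', Finset.sum_range_succ']
      have e0 : gamma 0 m * gamma (n + 2 - 0) m = gamma (n+2) m := by
        rw [gamma]; simp
      have e1 : gamma (0+1) m * gamma (n + 2 - (0+1)) m = gamma (n+1) m := by
        norm_num
        rw [gamma]; simp
      rw [e0, e1]
      have eQ : Q.eval (m : ℚ) = gamma (n+1) m
          + ∑ k ∈ Finset.range (T - 1), gamma (k+2) m * gamma (n + 2 - (k+2)) m := by
        rw [hQdef, eval_add, eval_finset_sum, ← hge m]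
        congr 1
        refine Finset.sum_congr rfl fun k hk => ?_
        obtain ⟨⟨ha1, ha2⟩, ⟨hb1, hb2⟩⟩ := hidx k hk
        rw [eval_mul, ← (hg (k+2) ha1 ha2).2.2 m, ← (hg (n + 2 - (k+2)) hb1 hb2).2.2 m]
      rw [eQ]
      have hsum : ∑ k ∈ Finset.range (T - 1), gamma (k+1+1) m * gamma (n + 2 - (k+1+1)) m
          = ∑ k ∈ Finset.range (T - 1), gamma (k+2) m * gamma (n + 2 - (k+2)) m := by
        refine Finset.sum_congr rfl fun k _ => ?_
        norm_num
      rw [hsum]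
      ring
    -- antidifferentiate
    obtain ⟨p, hpd, hpl, hpdiff⟩ := antideriv Q hQne
    rw [hQnat] at hpd hpl
    have hplpos : 0 < p.leadingCoeff := by
      rw [hpl]
      positivity
    set P := p - C (p.eval 0) with hPdef
    have hpdpos : (0 : WithBot ℕ) < p.degree := by
      rw [hpd]
      exact_mod_cast Nat.succ_pos n
    have hPdeg : P.degree = ((n + 1 : ℕ) : WithBot ℕ) := by
      rw [hPdef, degree_sub_C hpdpos, hpd]
    have hPnat : P.natDegree = n + 1 := natDegree_eq_of_degree_eq_some hPdeg
    have hPlc : 0 < P.leadingCoeff := by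
      have : P.leadingCoeff = p.leadingCoeff := by
        rw [leadingCoeff, hPnat, hPdef, coeff_sub, coeff_C]
        simp [leadingCoeff, natDegree_eq_of_degree_eq_some hpd]
      rwa [this]
    refine ⟨P, ?_, hPlc, ?_⟩
    · rw [hPdeg]; norm_cast
    · intro m
      induction m with
      | zero =>
        rw [gamma]
        simp [hPdef]
      | succ m ihm =>
        rw [hrec m, ihm]
        have hdiff := hpdiff (m : ℚ)
        simp only [hPdef, eval_sub, eval_C] at *
        push_cast
        linarith

end GammaPolyAux

/-- For every `h ≥ 1`, `m ↦ γ(h, m)` is a polynomial in `m` of degree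
exactly `h − 1`. -/
theorem gamma_polynomial (h : ℕ) (hh : 1 ≤ h) :
    ∃ p : Polynomial ℚ, p.degree = (h - 1 : ℕ) ∧ ∀ m : ℕ, gamma h m = p.eval (m : ℚ) := by
  obtain ⟨p, hd, _, he⟩ := gamma_poly_aux h hh
  exact ⟨p, hd, he⟩
end

section
/- For every fixed integer h ≥ 1, there exists a natural number M such that for all m ≥ M, 2^m · γ(h, m) ≤ binom(2^m, h); equivalently, for n = 2^m sufficiently large, the bound γ(h, log₂ n)/binom(n, h) ≤ 1/n holds, so the Iterated Swap Tree's soundness lower bound 1 − γ(h, log₂ n)/binom(n, h) is at least the optimal value 1 − 1/n. -/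
open Filter Finset

@[simp] theorem gamma_zero_left (m : ℕ) : gamma 0 m = 1 := by rw [gamma]

@[simp] theorem gamma_one_left (m : ℕ) : gamma 1 m = 1 := by rw [gamma]

@[simp] theorem gamma_add_two_zero (h : ℕ) : gamma (h + 2) 0 = 0 := by rw [gamma]

theorem gamma_add_two_succ (h m : ℕ) :
    gamma (h + 2) (m + 1) =
      ∑ k ∈ range ((h + 2) / 2 + 1), gamma k m * gamma (h + 2 - k) m := by
  rw [gamma]

theorem gamma_nonneg (h m : ℕ) : 0 ≤ gamma h m := by
  induction m generalizing h with
  | zero => rcases h with _ | _ | h <;> simp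
  | succ m ih =>
    rcases h with _ | _ | h
    · simp
    · simp
    · rw [gamma_add_two_succ]
      exact sum_nonneg fun k _ => mul_nonneg (ih k) (ih _)

theorem gamma_le_pow {h : ℕ} (hh : 1 ≤ h) (m : ℕ) : gamma h m ≤ (m : ℚ) ^ (h - 1) := by
  induction m generalizing h with
  | zero => rcases h with _ | _ | h <;> simp_all
  | succ m ih =>
    obtain _ | _ | h := h
    · omega
    · simp
    have hterm : ∀ i ∈ range ((h + 2) / 2),
        gamma (i + 1) m * gamma (h + 2 - (i + 1)) m ≤ (m : ℚ) ^ h := by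
      intro i hi
      have hih : i ≤ h := by have := mem_range.1 hi; omega
      calc gamma (i + 1) m * gamma (h + 2 - (i + 1)) m ≤ (m : ℚ) ^ i * (m : ℚ) ^ (h - i) := by
            gcongr
            · exact gamma_nonneg _ _
            · simpa using ih (h := i + 1) (by omega)
            · rw [show h + 2 - (i + 1) = h - i + 1 by omega]
              simpa using ih (h := h - i + 1) (by omega)
        _ = (m : ℚ) ^ h := pow_mul_pow_sub _ hih
    calc gamma (h + 2) (m + 1)
        ≤ ∑ _i ∈ range ((h + 2) / 2), (m : ℚ) ^ h + (m : ℚ) ^ (h + 1) := by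
          rw [gamma_add_two_succ, sum_range_succ']
          gcongr with i hi
          · exact hterm i hi
          · simpa using ih (h := h + 2) (by omega)
      _ ≤ (h + 1 : ℕ) * (m : ℚ) ^ h + (m : ℚ) ^ (h + 1) := by
          rw [sum_const, card_range, nsmul_eq_mul]
          gcongr
          omega
      _ ≤ ((m + 1 : ℕ) : ℚ) ^ (h + 2 - 1) := by
          simpa [add_comm] using
            pow_add_mul_le_add_pow (b := 1) (m.cast_nonneg' (α := ℚ)) (by positivity) (h + 1)

-- Termwise `n (h - i) ≤ h (n - i)` in `n^h h! ≤ h^h (n)_h`.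
theorem Nat.pow_le_pow_mul_choose {n h : ℕ} (hhn : h ≤ n) : n ^ h ≤ h ^ h * n.choose h := by
  have hfac : n ^ h * h.factorial ≤ h ^ h * n.descFactorial h := by
    have hpow (a : ℕ) : a ^ h = ∏ _i ∈ range h, a := by simp
    rw [← h.descFactorial_self, Nat.descFactorial_eq_prod_range, Nat.descFactorial_eq_prod_range,
      hpow n, hpow h, ← prod_mul_distrib, ← prod_mul_distrib]
    refine prod_le_prod' fun i _ => ?_
    rw [Nat.mul_sub, Nat.mul_sub, Nat.mul_comm n h]
    exact Nat.sub_le_sub_left (Nat.mul_le_mul_right i hhn) _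
  rw [Nat.descFactorial_eq_factorial_mul_choose, Nat.mul_left_comm, Nat.mul_comm] at hfac
  exact Nat.le_of_mul_le_mul_left hfac h.factorial_pos

theorem Nat.mul_pow_pred_le_choose {n m h : ℕ} (hh : 1 ≤ h) (hm : 1 ≤ m)
    (hmn : h ^ 2 * m ≤ n) :
    n * m ^ (h - 1) ≤ n.choose h := by
  have hhh : h ^ h ≤ (h ^ 2) ^ (h - 1) := by
    obtain rfl | hh2 := hh.eq_or_lt
    · simp
    rw [← pow_mul]
    exact Nat.pow_le_pow_right (by omega) (by omega)
  have hhn : h ≤ n := calc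
    h ≤ h ^ 2 * m := Nat.le_mul_of_pos_right _ hm |>.trans' (Nat.le_self_pow two_ne_zero h)
    _ ≤ n := hmn
  refine Nat.le_of_mul_le_mul_left (c := h ^ h) ?_ (by positivity)
  calc h ^ h * (n * m ^ (h - 1)) ≤ (h ^ 2) ^ (h - 1) * (n * m ^ (h - 1)) := by gcongr
    _ = n * (h ^ 2 * m) ^ (h - 1) := by ring
    _ ≤ n * n ^ (h - 1) := by gcongr
    _ = n ^ h := mul_pow_sub_one (by omega) n
    _ ≤ h ^ h * n.choose h := Nat.pow_le_pow_mul_choose hhn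

theorem Nat.eventually_mul_le_pow (c : ℕ) {b : ℕ} (hb : 1 < b) :
    ∀ᶠ m : ℕ in atTop, c * m ≤ b ^ m := by
  have hlo := (isLittleO_coe_const_pow_of_one_lt (R := ℝ) (r := b) (by exact_mod_cast hb)).bound
    (c := 1 / (c + 1)) (by positivity)
  filter_upwards [hlo] with m hm
  rw [Real.norm_natCast, norm_pow, Real.norm_natCast, div_mul_eq_mul_div, one_mul,
    le_div_iff₀ (by positivity)] at hm
  have : (c : ℝ) * m ≤ b ^ m := by nlinarith [(m.cast_nonneg : (0 : ℝ) ≤ m)]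
  exact_mod_cast this

/-- For every fixed `h ≥ 1` there is `M` such that for all `m ≥ M`
(i.e. for `n = 2^m` sufficiently large), `γ(h, log₂ n)/binom(n, h) ≤ 1/n`, i.e.
`n · γ(h, m) ≤ binom(n, h)`: the Iterated Swap Tree achieves optimal soundness `≥ 1 - 1/n`. -/
theorem gamma_eventually_optimal (h : ℕ) (hh : 1 ≤ h) :
    ∃ M : ℕ, ∀ m : ℕ, M ≤ m →
      (2 ^ m : ℚ) * gamma h m ≤ ((2 ^ m).choose h : ℚ) := by
  obtain ⟨M, hM⟩ := eventually_atTop.1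
    ((Nat.eventually_mul_le_pow (h ^ 2) one_lt_two).and (eventually_ge_atTop 1))
  refine ⟨M, fun m hm => ?_⟩
  obtain ⟨hm2, hm1⟩ := hM m hm
  calc (2 ^ m : ℚ) * gamma h m ≤ 2 ^ m * (m : ℚ) ^ (h - 1) := by
        gcongr; exact gamma_le_pow hh m
    _ ≤ _ := by exact_mod_cast Nat.mul_pow_pred_le_choose hh hm1 hm2
end

section
/- For all natural numbers m and all h with 0 ≤ h ≤ 2^m, the sum over all binary words w of length 2^m of Hamming weight h of (1/2)^{c(w)} equals γ(h, m): Σ_{w ∈ {0,1}^{2^m}, weight(w) = h} (1/2)^{c(w)} = γ(h, m). (This identifies γ(h,m)/binom(2^m,h) as the average over uniformly random placements of h marked positions of (1/2) raised to the number of binary-tree nodes at which the two halves carry different numbers of marked positions.) -/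
/-- The Hamming weight of a binary word. -/
def wt {N : ℕ} (w : Fin N → Bool) : ℕ := (Finset.univ.filter fun j => w j = true).card

/-- The click count `c(w)` of a binary word of length `2^m`: recursively, the number of
binary-tree nodes at which the two halves carry different numbers of ones. -/
def clicks : (m : ℕ) → (Fin (2 ^ m) → Bool) → ℕ
  | 0, _ => 0
  | m + 1, w =>
    let wL : Fin (2 ^ m) → Bool := fun j =>
      w ⟨j, lt_of_lt_of_le j.isLt (Nat.pow_le_pow_right (by norm_num) (Nat.le_succ m))⟩
    let wR : Fin (2 ^ m) → Bool := fun j =>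
      w ⟨2 ^ m + j, by have := j.isLt; rw [pow_succ]; omega⟩
    clicks m wL + clicks m wR + (if wt wL = wt wR then 0 else 1)

/-!
Cut a word of length `2^(m+1)` into its halves `u`, `v`: its weight is `wt u + wt v`, and its
click count is `clicks u + clicks v`, plus one exactly when `wt u ≠ wt v`. Grouping the pairs
`(u, v)` by their weights `(a, b)` turns the sum into `∑_{a+b=h} c(a,b) S(a) S(b)`, where `S` is
the sum one level down and `c` is `1` on the diagonal and `1/2` off it. Since the summand is
symmetric in `a ↔ b`, the off-diagonal halves pair up to `∑_{a ≤ b} S(a) S(b)`, which is the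
recursion defining `γ`.
-/

open Finset

theorem sum_filter_add_eq_sum_antidiagonal {α β M R : Type*} [Fintype α] [Fintype β]
    [AddMonoid M] [HasAntidiagonal M] [DecidableEq M] [CommSemiring R]
    (f : α → M) (f' : β → M) (g : α → R) (g' : β → R) (F : M → M → R) (n : M) :
    ∑ p : α × β with f p.1 + f' p.2 = n, F (f p.1) (f' p.2) * (g p.1 * g' p.2) =
      ∑ q ∈ antidiagonal n,
        F q.1 q.2 * ((∑ x with f x = q.1, g x) * ∑ y with f' y = q.2, g' y) := by
  rw [← sum_fiberwise_of_maps_to (g := fun p : α × β => (f p.1, f' p.2)) (t := antidiagonal n)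
    (fun p hp => mem_antidiagonal.mpr (mem_filter.mp hp).2)]
  refine sum_congr rfl fun q hq => ?_
  rw [sum_mul_sum, ← sum_product', mul_sum]
  refine sum_congr ?_ fun p hp => ?_
  · ext p
    simp only [mem_filter, mem_univ, true_and, mem_product, Prod.ext_iff]
    refine ⟨fun h => h.2, fun ⟨h1, h2⟩ => ⟨?_, h1, h2⟩⟩
    rw [h1, h2]
    exact mem_antidiagonal.mp hq
  · obtain ⟨h1, h2⟩ := mem_product.mp hp
    rw [(mem_filter.mp h1).2, (mem_filter.mp h2).2]

theorem sum_antidiagonal_ite_eq_sum_range {K : Type*} [Semifield K] [CharZero K]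
    (T : ℕ → ℕ → K) (hT : ∀ a b, T a b = T b a) (n : ℕ) :
    ∑ p ∈ antidiagonal n, (if p.1 = p.2 then 1 else 1 / 2) * T p.1 p.2 =
      ∑ k ∈ range (n / 2 + 1), T k (n - k) := by
  have hsplit : ∀ a b : ℕ, (if a = b then 1 else 1 / 2 : K) * T a b =
      (if a ≤ b then T a b else 0) / 2 + (if b ≤ a then T a b else 0) / 2 := by
    intro a b
    rcases lt_trichotomy a b with hab | rfl | hab
    · simp [hab.ne, hab.le, hab.not_ge, div_eq_inv_mul]
    · simp
    · simp [hab.ne', hab.le, hab.not_ge, div_eq_inv_mul]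
  have hswap : ∑ p ∈ antidiagonal n, (if p.2 ≤ p.1 then T p.1 p.2 else 0) / 2 =
      ∑ p ∈ antidiagonal n, (if p.1 ≤ p.2 then T p.1 p.2 else 0) / 2 := by
    rw [← Nat.sum_antidiagonal_swap]
    simp only [Prod.fst_swap, Prod.snd_swap, hT]
  have hhalf : ∑ k ∈ range (n + 1) with k ≤ n - k, T k (n - k) =
      ∑ k ∈ range (n / 2 + 1), T k (n - k) := by
    congr 1
    ext k
    simp only [mem_filter, mem_range]
    omega
  simp_rw [hsplit, sum_add_distrib, hswap, ← sum_div, add_halves]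
  rw [Nat.sum_antidiagonal_eq_sum_range_succ (fun a b => if a ≤ b then T a b else 0),
    ← sum_filter, hhalf]

theorem gamma_zero (h : ℕ) : gamma h 0 = if h ≤ 1 then 1 else 0 := by
  match h with
  | 0 => simp only [gamma, zero_le, ↓reduceIte]
  | 1 => simp only [gamma, le_refl, ↓reduceIte]
  | h + 2 => simp only [gamma, Nat.reduceLeDiff, ↓reduceIte]

theorem gamma_succ_s17 (h m : ℕ) :
    gamma h (m + 1) = ∑ k ∈ range (h / 2 + 1), gamma k m * gamma (h - k) m := by
  match h with
  | 0 => simp only [gamma, Nat.zero_div, zero_add, range_one, zero_tsub, mul_one, sum_singleton]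
  | 1 => simp only [gamma, Nat.reduceDiv, zero_add, range_one, sum_singleton, tsub_zero, mul_one]
  | h + 2 => rw [gamma]

theorem wt_le {N : ℕ} (w : Fin N → Bool) : wt w ≤ N :=
  (card_filter_le _ _).trans_eq (card_fin N)

def finTwoPowSuccEquiv (m : ℕ) : Fin (2 ^ (m + 1)) ≃ Fin (2 ^ m) ⊕ Fin (2 ^ m) :=
  (finCongr (by rw [pow_succ, mul_two])).trans finSumFinEquiv.symm

/-- The components are definitionally the halves `wL`, `wR` used in `clicks`. -/
def halvesEquiv (m : ℕ) (α : Type*) :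
    (Fin (2 ^ (m + 1)) → α) ≃ (Fin (2 ^ m) → α) × (Fin (2 ^ m) → α) :=
  ((finTwoPowSuccEquiv m).arrowCongr (.refl α)).trans (Equiv.sumArrowEquivProdArrow _ _ _)

theorem clicks_succ (m : ℕ) (w : Fin (2 ^ (m + 1)) → Bool) :
    clicks (m + 1) w = clicks m (halvesEquiv m Bool w).1 + clicks m (halvesEquiv m Bool w).2 +
      if wt (halvesEquiv m Bool w).1 = wt (halvesEquiv m Bool w).2 then 0 else 1 :=
  rfl

theorem wt_halvesEquiv_fst_add_snd (m : ℕ) (w : Fin (2 ^ (m + 1)) → Bool) :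
    wt (halvesEquiv m Bool w).1 + wt (halvesEquiv m Bool w).2 = wt w := by
  simp only [wt, card_filter]
  rw [Fintype.sum_equiv (finTwoPowSuccEquiv m) (fun i => if w i then 1 else 0)
    (fun s => if w ((finTwoPowSuccEquiv m).symm s) then 1 else 0)
    (fun i => by rw [Equiv.symm_apply_apply]), Fintype.sum_sum_type]
  rfl

theorem card_filter_wt_eq_of_length_one (h : ℕ) :
    #{w : Fin (2 ^ 0) → Bool | wt w = h} = if h ≤ 1 then 1 else 0 := by
  match h with
  | 0 => decide
  | 1 => decide
  | h + 2 =>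
    simpa using fun w : Fin (2 ^ 0) → Bool => (wt_le w).trans_lt (by omega : 2 ^ 0 < h + 2) |>.ne

theorem sum_filter_wt_pow_clicks_succ {R : Type*} [CommSemiring R] (x : R) (m h : ℕ) :
    ∑ w : Fin (2 ^ (m + 1)) → Bool with wt w = h, x ^ clicks (m + 1) w =
      ∑ p : (Fin (2 ^ m) → Bool) × (Fin (2 ^ m) → Bool) with wt p.1 + wt p.2 = h,
        (if wt p.1 = wt p.2 then 1 else x) * (x ^ clicks m p.1 * x ^ clicks m p.2) := by
  refine sum_equiv (halvesEquiv m Bool)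
    (fun w => by simp only [wt_halvesEquiv_fst_add_snd, mem_filter, mem_univ, true_and])
    fun w _ => ?_
  rw [clicks_succ, pow_add, pow_add]
  split_ifs <;> ring

theorem sum_half_pow_clicks_general (m h : ℕ) :
    ∑ w ∈ Finset.univ.filter (fun w : Fin (2 ^ m) → Bool => wt w = h),
      ((1 : ℚ) / 2) ^ clicks m w = gamma h m := by
  induction m generalizing h with
  | zero =>
    simp only [clicks, pow_zero, sum_const, nsmul_one, card_filter_wt_eq_of_length_one, gamma_zero,
      Nat.cast_ite, Nat.cast_one, Nat.cast_zero]
  | succ m ih =>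
    calc _ = ∑ q ∈ antidiagonal h,
          (if q.1 = q.2 then 1 else 1 / 2) * (gamma q.1 m * gamma q.2 m) := by
          rw [sum_filter_wt_pow_clicks_succ]
          exact (sum_filter_add_eq_sum_antidiagonal wt wt (fun u => (1 / 2 : ℚ) ^ clicks m u)
            (fun u => (1 / 2 : ℚ) ^ clicks m u) (fun a b => if a = b then 1 else 1 / 2) h).trans
              (by simp only [ih])
      _ = ∑ k ∈ range (h / 2 + 1), gamma k m * gamma (h - k) m :=
          sum_antidiagonal_ite_eq_sum_range (fun a b => gamma a m * gamma b m)
            (fun _ _ => mul_comm _ _) h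
      _ = gamma h (m + 1) := (gamma_succ_s17 h m).symm

/-- `∑_{w : weight(w) = h} (1/2)^{c(w)} = γ(h, m)`. -/
theorem sum_half_pow_clicks (m h : ℕ) (hh : h ≤ 2 ^ m) :
    ∑ w ∈ Finset.univ.filter (fun w : Fin (2 ^ m) → Bool => wt w = h),
      ((1 : ℚ) / 2) ^ clicks m w = gamma h m :=
  sum_half_pow_clicks_general m h
end
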